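/- Let G be the 5-pointed star, the graph with one central vertex adjacent to five leaf vertices of degree one (K_{1,5}). Then for each n ∈ {2, 3, 4}, there exists a common additive valuation (for instance, weight 1 on every vertex) such that no connected EF1 allocation of G among n agents exists (hence no connected EF1-outer allocation). -/

import Mathlib

open Finset

variable {V : Type*}

/-- A piece of an allocation: either empty or inducing a connected subgraph. -/
def ConnPiece (G : SimpleGraph V) (S : Finset V) : Prop :=
  S = ∅ ∨ (G.induce (S : Set V)).Connected

/-- A connected allocation: a partition of `V` into `n` pieces, each connected. -/
def IsConnAlloc (G : SimpleGraph V) {n : ℕ} (A : Fin n → Finset V) : Prop :=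
  (∀ x : V, ∃! i, x ∈ A i) ∧ ∀ i, ConnPiece G (A i)

def IsMonotoneVal (v : Finset V → ℝ) : Prop :=
  v ∅ = 0 ∧ (∀ S, 0 ≤ v S) ∧ ∀ S T : Finset V, S ⊆ T → v S ≤ v T

def IsAdditiveVal (v : Finset V → ℝ) : Prop :=
  (∀ S, 0 ≤ v S) ∧ ∀ S : Finset V, v S = ∑ x ∈ S, v {x}

def IsEF1 [DecidableEq V] {n : ℕ} (v : Fin n → Finset V → ℝ) (A : Fin n → Finset V) : Prop :=
  ∀ i j : Fin n, v i (A i) ≥ v i (A j) ∨ ∃ x ∈ A j, v i (A i) ≥ v i ((A j).erase x)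

def IsEF1Outer [DecidableEq V] (G : SimpleGraph V) {n : ℕ}
    (v : Fin n → Finset V → ℝ) (A : Fin n → Finset V) : Prop :=
  ∀ i j : Fin n, v i (A i) ≥ v i (A j) ∨
    ∃ x ∈ A j, ConnPiece G ((A j).erase x) ∧ v i (A i) ≥ v i ((A j).erase x)

/-- A generalized cutset for `G`, with gap `r ≥ 2`. -/
structure GenCutset (G : SimpleGraph V) where
  t : ℕ
  C : Fin t → Finset V
  τ : Fin t → ℕ
  r : ℕ
  r_ge : 2 ≤ r
  H : Fin ((∑ i, τ i) + r) → Finset V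
  C_nonempty : ∀ i, (C i).Nonempty
  C_disjoint : ∀ i j, i ≠ j → Disjoint (C i) (C j)
  C_connected : ∀ i, (G.induce ((C i : Set V))).Connected
  H_nonempty : ∀ j, (H j).Nonempty
  H_disjoint : ∀ j k, j ≠ k → Disjoint (H j) (H k)
  H_partition : ∀ x : V, (∀ i, x ∉ C i) ↔ ∃ j, x ∈ H j
  H_independent : ∀ j k, j ≠ k → ∀ x ∈ H j, ∀ y ∈ H k, ¬ G.Adj x y
  contact_unique : ∀ i j, ∀ x ∈ C i, ∀ y ∈ C i,
      (∃ z ∈ H j, G.Adj x z) → (∃ z ∈ H j, G.Adj y z) → x = y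
  typeI_tau : ∀ i, (C i).card = 1 → τ i = 1
  typeII_indep : ∀ i i', i ≠ i' → 1 < (C i).card → 1 < (C i').card →
      ∀ x ∈ C i, ∀ y ∈ C i', ¬ G.Adj x y
  typeII_contacts : ∀ i, 1 < (C i).card →
      (∃ S : Finset (Fin ((∑ i, τ i) + r)), S.card = 2 * τ i + 1 ∧
        ∀ j, j ∈ S ↔ ∃ x ∈ C i, ∃ z ∈ H j, G.Adj x z) ∧
      (∀ x ∈ C i, ∀ j k, (∃ z ∈ H j, G.Adj x z) → (∃ z ∈ H k, G.Adj x z) → j = k)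

/-- The valence of a generalized cutset. -/
abbrev GenCutset.valence {G : SimpleGraph V} (cs : GenCutset G) : ℕ := ∑ i, cs.τ i

/-- `S` dominates a member of the cutset. -/
def GenCutset.Dominates {G : SimpleGraph V} (cs : GenCutset G)
    (S : Finset V) (i : Fin cs.t) : Prop :=
  ((cs.C i).card = 1 ∧ cs.C i ⊆ S) ∨
  (1 < (cs.C i).card ∧ ∃ x, x ∈ cs.C i ∧ x ∈ S ∧ ∃ y, y ∈ cs.C i ∧ y ∈ S ∧ x ≠ y ∧
    (∃ j, ∃ z ∈ cs.H j, G.Adj x z) ∧ (∃ j, ∃ z ∈ cs.H j, G.Adj y z))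

/-- The 5-pointed star `K_{1,5}`: vertex 0 is the center, adjacent to the five leaves. -/
def Star5 : SimpleGraph (Fin 6) :=
  SimpleGraph.fromRel (fun x y => x = 0 ∧ y ≠ 0)

/-!
Value every vertex at `1`. In a star every edge meets the centre, so a connected piece
avoiding the centre has at most one vertex. An agent holding such a piece envies the
centre piece by more than one good unless that piece has at most two vertices, and then
the `n` pieces cover at most `n + 1 < 6` vertices.
-/

theorem IsEF1Outer.isEF1 [DecidableEq V] {G : SimpleGraph V} {n : ℕ}
    {v : Fin n → Finset V → ℝ} {A : Fin n → Finset V} (h : IsEF1Outer G v A) : IsEF1 v A :=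
  fun i j => (h i j).imp_right fun ⟨x, hx, _, hle⟩ => ⟨x, hx, hle⟩

theorem ConnPiece.card_le_one_of_isIndepSet {G : SimpleGraph V} {S : Finset V}
    (h : ConnPiece G S) (hS : G.IsIndepSet (S : Set V)) : S.card ≤ 1 := by
  rcases h with rfl | hconn
  · simp
  have hbot : G.induce (S : Set V) = ⊥ := by
    ext ⟨x, hx⟩ ⟨y, hy⟩
    simpa using fun hxy : G.Adj x y => hS hx hy (G.ne_of_adj hxy) hxy
  rw [hbot, SimpleGraph.connected_bot_iff] at hconn
  exact Finset.card_le_one_iff_subsingleton_coe.mpr hconn.1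

theorem IsConnAlloc.sum_card [Fintype V] [DecidableEq V] {G : SimpleGraph V} {n : ℕ}
    {A : Fin n → Finset V} (hA : IsConnAlloc G A) : ∑ i, (A i).card = Fintype.card V := by
  have hdisj : ((univ : Finset (Fin n)) : Set (Fin n)).PairwiseDisjoint A := by
    intro i _ j _ hij
    refine Finset.disjoint_left.mpr fun x hxi hxj => hij ?_
    obtain ⟨k, -, hk⟩ := hA.1 x
    exact (hk i hxi).trans (hk j hxj).symm
  have hcover : univ.biUnion A = univ :=
    eq_univ_of_forall fun x => mem_biUnion.mpr
      ⟨(hA.1 x).exists.choose, mem_univ _, (hA.1 x).exists.choose_spec⟩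
  rw [← card_biUnion hdisj, hcover, card_univ]

theorem IsEF1.card_le_card_add_one [DecidableEq V] {n : ℕ} {A : Fin n → Finset V}
    (h : IsEF1 (fun _ => fun S => (S.card : ℝ)) A) (i j : Fin n) :
    (A j).card ≤ (A i).card + 1 := by
  rcases h i j with hle | ⟨x, hx, hle⟩ <;> simp only [ge_iff_le, Nat.cast_le] at hle
  · omega
  · have := card_erase_of_mem hx
    omega

theorem IsConnAlloc.not_isEF1_card_of_forall_adj_center [Fintype V] [DecidableEq V]
    {G : SimpleGraph V} {n : ℕ} {A : Fin n → Finset V} (hA : IsConnAlloc G A)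
    {c : V} (hc : ∀ x y, G.Adj x y → x = c ∨ y = c) (hn : 2 ≤ n)
    (hV : n + 2 ≤ Fintype.card V) :
    ¬ IsEF1 (fun _ => fun S => (S.card : ℝ)) A := by
  intro hEF1
  obtain ⟨i₀, -, hc_uniq⟩ := hA.1 c
  have hsmall : ∀ j ≠ i₀, (A j).card ≤ 1 := fun j hj =>
    (hA.2 j).card_le_one_of_isIndepSet fun x _ y _ _ hxy => by
      rcases hc x y hxy with rfl | rfl <;> exact hj (hc_uniq j ‹_›)
  have : Nontrivial (Fin n) := Fin.nontrivial_iff_two_le.mpr hn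
  obtain ⟨j, hj⟩ := exists_ne i₀
  have hbig : (A i₀).card ≤ 2 :=
    (hEF1.card_le_card_add_one j i₀).trans (Nat.add_le_add_right (hsmall j hj) 1)
  have hrest : ∑ i ∈ univ.erase i₀, (A i).card ≤ n - 1 := by
    simpa using sum_le_card_nsmul (univ.erase i₀) _ 1 fun i hi => hsmall i (ne_of_mem_erase hi)
  have := add_sum_erase univ (fun i => (A i).card) (mem_univ i₀)
  rw [hA.sum_card] at this
  omega

theorem star5_adj {x y : Fin 6} (h : Star5.Adj x y) : x = 0 ∨ y = 0 := by
  rcases h with ⟨-, ⟨hx, -⟩ | ⟨hy, -⟩⟩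
  · exact Or.inl hx
  · exact Or.inr hy

/-- for each `n ∈ {2, 3, 4}` there is a common additive valuation under
which the 5-pointed star has no connected EF1 (hence no connected EF1-outer) allocation
among `n` agents. -/
theorem star5_no_connected_EF1 (n : ℕ) (hn : n = 2 ∨ n = 3 ∨ n = 4) :
    ∃ v : Finset (Fin 6) → ℝ, IsAdditiveVal v ∧
      ∀ A : Fin n → Finset (Fin 6), IsConnAlloc Star5 A →
        ¬ IsEF1 (fun _ : Fin n => v) A ∧ ¬ IsEF1Outer Star5 (fun _ : Fin n => v) A := by
  refine ⟨fun S => (S.card : ℝ), ⟨fun S => by positivity, fun S => by simp⟩, fun A hA => ?_⟩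
  have hEF1 := hA.not_isEF1_card_of_forall_adj_center (fun _ _ => star5_adj)
    (by omega) (by simp; omega)
  exact ⟨hEF1, fun h => hEF1 h.isEF1⟩
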